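/- arXiv:2412.15225 — 2 statements merged into one kernel-verified Lean document; each statement's English description precedes it below -/
import Mathlib

section
/- For a reaction network N, the following are equivalent: (i) the finest independent decomposition (FID) is a coarsening of the finest incidence-independent decomposition (FIID); (ii) the FID is bi-independent; (iii) every independent decomposition of N is bi-independent; (iv) for every independent decomposition, the deficiency of N equals the sum of the deficiencies of its subnetworks. -/
section AuxLemmas
open Module Submodule
section
variable {K E W : Type*} [Field K] [AddCommGroup E] [Module K E] [AddCommGroup W] [Module K W]
  [FiniteDimensional K E]

theorem aux_rn (f : E →ₗ[K] W) (S : Submodule K E) :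
    finrank K (S.map f) + finrank K (LinearMap.ker f ⊓ S : Submodule K E) = finrank K S := by
  have h := LinearMap.finrank_range_add_finrank_ker (f.domRestrict S)
  rw [LinearMap.range_domRestrict, LinearMap.ker_domRestrict] at h
  rw [← h]
  congr 1
  rw [LinearEquiv.finrank_eq (Submodule.equivSubtypeMap S ((LinearMap.ker f).comap S.subtype)),
    Submodule.map_comap_subtype, inf_comm]

theorem aux_fsle {ι : Type*} [DecidableEq ι] (s : Finset ι) (V : ι → Submodule K E) :
    finrank K (s.sup V : Submodule K E) ≤ ∑ i ∈ s, finrank K (V i) := by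
  induction s using Finset.induction with
  | empty => simp
  | @insert a s h ih =>
    rw [Finset.sup_insert, Finset.sum_insert h]
    have h2 := Submodule.finrank_sup_add_finrank_inf_eq (V a) (s.sup V)
    omega

omit [FiniteDimensional K E] in
theorem aux_iSup_eq_sup_univ {ι : Type*} [Fintype ι] (V : ι → Submodule K E) :
    (⨆ i, V i) = Finset.univ.sup V := by
  rw [Finset.sup_eq_iSup]; simp

theorem aux_fle_sum {ι : Type*} [Fintype ι] [DecidableEq ι] (V : ι → Submodule K E) :
    finrank K (⨆ i, V i : Submodule K E) ≤ ∑ i, finrank K (V i) := by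
  rw [aux_iSup_eq_sup_univ]; exact aux_fsle _ _

theorem aux_indep_iff_finrank {ι : Type*} [Fintype ι] [DecidableEq ι] (V : ι → Submodule K E) :
    iSupIndep V ↔ finrank K (⨆ i, V i : Submodule K E) = ∑ i, finrank K (V i) := by
  constructor
  · intro hind
    rw [aux_iSup_eq_sup_univ]
    have key : ∀ s : Finset ι, finrank K (s.sup V : Submodule K E) = ∑ i ∈ s, finrank K (V i) := by
      intro s
      induction s using Finset.induction with
      | empty => simp
      | @insert a s h ih =>
        rw [Finset.sup_insert, Finset.sum_insert h, ← ih]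
        have h2 := Submodule.finrank_sup_add_finrank_inf_eq (V a) (s.sup V)
        have hd : V a ⊓ s.sup V = ⊥ := by
          have hle : s.sup V ≤ ⨆ j, ⨆ (_ : j ≠ a), V j := by
            rw [Finset.sup_eq_iSup]
            exact iSup_mono fun i => iSup_le fun hi =>
              le_iSup_of_le (fun (he : i = a) => h (he ▸ hi)) le_rfl
          exact ((iSupIndep_def.mp hind a).mono_right hle).eq_bot
        rw [hd] at h2
        simp only [finrank_bot, add_zero] at h2
        omega
    exact key _
  · intro heq
    rw [iSupIndep_def]
    intro a
    have hW : (⨆ j, ⨆ (_ : j ≠ a), V j) = (Finset.univ.erase a).sup V := by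
      rw [Finset.sup_eq_iSup]
      apply le_antisymm
      · exact iSup_mono fun j => iSup_le fun hj =>
          le_iSup_of_le (Finset.mem_erase.mpr ⟨hj, Finset.mem_univ j⟩) le_rfl
      · exact iSup_mono fun j => iSup_le fun hj =>
          le_iSup_of_le (Finset.mem_erase.mp hj).1 le_rfl
    rw [hW]
    have hsup : (⨆ i, V i) = V a ⊔ (Finset.univ.erase a).sup V := by
      rw [aux_iSup_eq_sup_univ, ← Finset.sup_insert, Finset.insert_erase (Finset.mem_univ a)]
    have h2 := Submodule.finrank_sup_add_finrank_inf_eq (V a) ((Finset.univ.erase a).sup V)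
    have h3 : finrank K ((Finset.univ.erase a).sup V : Submodule K E)
        ≤ ∑ i ∈ Finset.univ.erase a, finrank K (V i) := aux_fsle _ _
    have h4 : finrank K (V a) + ∑ i ∈ Finset.univ.erase a, finrank K (V i)
        = ∑ i, finrank K (V i) := Finset.add_sum_erase _ (fun i => finrank K (V i)) (Finset.mem_univ a)
    rw [hsup] at heq
    have h5 : finrank K (V a ⊓ (Finset.univ.erase a).sup V : Submodule K E) = 0 := by omega
    rw [disjoint_iff]
    exact Submodule.finrank_eq_zero.mp h5
end



/-- Image of the incidence matrix of the subnetwork with reactions `{j | p j = i}`,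
where `c j ∈ ℝ^n` is the incidence column of reaction `j`. -/
def incImage {n r k : ℕ} (c : Fin r → (Fin n → ℝ)) (p : Fin r → Fin k) (i : Fin k) :
    Submodule ℝ (Fin n → ℝ) :=
  Submodule.span ℝ (c '' {j | p j = i})

/-- Stoichiometric subspace of the subnetwork: image of the incidence image under the
molecularity map `Y`. -/
def stoSub {m n r k : ℕ} (Y : Matrix (Fin m) (Fin n) ℝ) (c : Fin r → (Fin n → ℝ))
    (p : Fin r → Fin k) (i : Fin k) : Submodule ℝ (Fin m → ℝ) :=
  Submodule.map Y.mulVecLin (incImage c p i)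

/-- The decomposition is independent: the network stoichiometric subspace is the direct sum
of the subnetwork stoichiometric subspaces. -/
def IsIndepDecomp {m n r k : ℕ} (Y : Matrix (Fin m) (Fin n) ℝ) (c : Fin r → (Fin n → ℝ))
    (p : Fin r → Fin k) : Prop :=
  iSupIndep (stoSub Y c p) ∧
    (⨆ i, stoSub Y c p i) =
      Submodule.map Y.mulVecLin (Submodule.span ℝ (Set.range c))

/-- The decomposition is incidence-independent: the image of the network incidence matrix is
the direct sum of the images of the subnetwork incidence matrices. -/
def IsIncIndepDecomp {n r k : ℕ} (c : Fin r → (Fin n → ℝ)) (p : Fin r → Fin k) : Prop :=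
  iSupIndep (incImage c p) ∧
    (⨆ i, incImage c p i) = Submodule.span ℝ (Set.range c)

/-- Deficiency of the network: `dim (ker Y ⊓ Im Ia)`. -/
noncomputable def netDef {m n r : ℕ} (Y : Matrix (Fin m) (Fin n) ℝ) (c : Fin r → (Fin n → ℝ)) : ℕ :=
  Module.finrank ℝ
    (LinearMap.ker Y.mulVecLin ⊓ Submodule.span ℝ (Set.range c) : Submodule ℝ (Fin n → ℝ))

/-- Deficiency of the `i`-th subnetwork. -/
noncomputable def subDef {m n r k : ℕ} (Y : Matrix (Fin m) (Fin n) ℝ) (c : Fin r → (Fin n → ℝ))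
    (p : Fin r → Fin k) (i : Fin k) : ℕ :=
  Module.finrank ℝ
    (LinearMap.ker Y.mulVecLin ⊓ incImage c p i : Submodule ℝ (Fin n → ℝ))

/-- `q` is a coarsening of `p`: every block of `p` is contained in a block of `q`. -/
def Coarsens {r : ℕ} (q p : Fin r → Fin r) : Prop :=
  ∀ j j' : Fin r, p j = p j' → q j = q j'

/-- `fid` is the finest independent decomposition: it is independent and every independent
decomposition is a coarsening of it. -/
def IsFID {m n r : ℕ} (Y : Matrix (Fin m) (Fin n) ℝ) (c : Fin r → (Fin n → ℝ))
    (fid : Fin r → Fin r) : Prop :=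
  IsIndepDecomp Y c fid ∧ ∀ p : Fin r → Fin r, IsIndepDecomp Y c p → Coarsens p fid

/-- `fiid` is the finest incidence-independent decomposition: it is incidence-independent and
every incidence-independent decomposition is a coarsening of it. -/
def IsFIID {n r : ℕ} (c : Fin r → (Fin n → ℝ)) (fiid : Fin r → Fin r) : Prop :=
  IsIncIndepDecomp c fiid ∧ ∀ p : Fin r → Fin r, IsIncIndepDecomp c p → Coarsens p fiid

-- E: iSup of incImage is the whole span
theorem iSup_incImage {n r k : ℕ} (c : Fin r → (Fin n → ℝ)) (p : Fin r → Fin k)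
    : (⨆ i, incImage c p i) = Submodule.span ℝ (Set.range c) := by
  simp only [incImage, ← Submodule.span_iUnion]
  congr 1
  ext x
  simp only [Set.mem_iUnion, Set.mem_image, Set.mem_setOf_eq, Set.mem_range]
  constructor
  · rintro ⟨i, j, _, rfl⟩; exact ⟨j, rfl⟩
  · rintro ⟨j, rfl⟩; exact ⟨p j, j, rfl, rfl⟩

theorem isIncIndep_iff {n r k : ℕ} (c : Fin r → (Fin n → ℝ)) (p : Fin r → Fin k) :
    IsIncIndepDecomp c p ↔
      Module.finrank ℝ (Submodule.span ℝ (Set.range c)) = ∑ i, Module.finrank ℝ (incImage c p i) := by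
  rw [IsIncIndepDecomp, aux_indep_iff_finrank, iSup_incImage]
  exact and_iff_left rfl

theorem isIndep_iff {m n r k : ℕ} (Y : Matrix (Fin m) (Fin n) ℝ) (c : Fin r → (Fin n → ℝ))
    (p : Fin r → Fin k) :
    IsIndepDecomp Y c p ↔
      Module.finrank ℝ (Submodule.map Y.mulVecLin (Submodule.span ℝ (Set.range c)))
        = ∑ i, Module.finrank ℝ (stoSub Y c p i) := by
  have hsup : (⨆ i, stoSub Y c p i) = Submodule.map Y.mulVecLin (Submodule.span ℝ (Set.range c)) := by
    simp only [stoSub, ← Submodule.map_iSup, iSup_incImage]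
  rw [IsIndepDecomp, aux_indep_iff_finrank, hsup]
  exact and_iff_left rfl

-- key identity
theorem key_identity {m n r k : ℕ} (Y : Matrix (Fin m) (Fin n) ℝ) (c : Fin r → (Fin n → ℝ))
    (p : Fin r → Fin k) (hp : IsIndepDecomp Y c p) :
    netDef Y c + ∑ i, Module.finrank ℝ (incImage c p i)
      = (∑ i, subDef Y c p i) + Module.finrank ℝ (Submodule.span ℝ (Set.range c)) := by
  have h1 := aux_rn Y.mulVecLin (Submodule.span ℝ (Set.range c))
  have h2 : ∀ i, Module.finrank ℝ (stoSub Y c p i) + subDef Y c p i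
      = Module.finrank ℝ (incImage c p i) := fun i => aux_rn Y.mulVecLin (incImage c p i)
  have h3 := (isIndep_iff Y c p).mp hp
  rw [netDef]
  calc Module.finrank ℝ (LinearMap.ker Y.mulVecLin ⊓ Submodule.span ℝ (Set.range c) :
        Submodule ℝ (Fin n → ℝ)) + ∑ i, Module.finrank ℝ (incImage c p i)
      = Module.finrank ℝ (LinearMap.ker Y.mulVecLin ⊓ Submodule.span ℝ (Set.range c) :
        Submodule ℝ (Fin n → ℝ)) + ∑ i, (Module.finrank ℝ (stoSub Y c p i) + subDef Y c p i) := by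
        simp only [h2]
    _ = _ := by
        rw [Finset.sum_add_distrib, ← h3, ← h1]; ring

theorem indep_incIndep_iff_def {m n r k : ℕ} (Y : Matrix (Fin m) (Fin n) ℝ)
    (c : Fin r → (Fin n → ℝ)) (p : Fin r → Fin k) (hp : IsIndepDecomp Y c p) :
    (IsIncIndepDecomp c p ↔ netDef Y c = ∑ i, subDef Y c p i) := by
  rw [isIncIndep_iff]
  have hk := key_identity Y c p hp
  constructor <;> intro h <;> omega

-- coarsening preserves incidence-independence
theorem coarsens_incIndep {n r : ℕ} (c : Fin r → (Fin n → ℝ)) (q p : Fin r → Fin r)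
    (hco : Coarsens q p) (hp : IsIncIndepDecomp c p) : IsIncIndepDecomp c q := by
  rw [isIncIndep_iff] at hp ⊢
  refine le_antisymm ?_ ?_
  · rw [← iSup_incImage c q]
    exact aux_fle_sum _
  · rw [hp]
    -- W i i' := span (c '' ({j | p j = i'} ∩ {j | q j = i}))
    set W : Fin r → Fin r → Submodule ℝ (Fin n → ℝ) :=
      fun i i' => Submodule.span ℝ (c '' ({j | p j = i'} ∩ {j | q j = i})) with hW
    have hdecomp : ∀ i, incImage c q i = ⨆ i', W i i' := by
      intro i
      rw [incImage, hW]
      simp only [← Submodule.span_iUnion]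
      congr 1
      ext x
      simp only [Set.mem_iUnion, Set.mem_image, Set.mem_setOf_eq, Set.mem_inter_iff]
      constructor
      · rintro ⟨j, hj, rfl⟩; exact ⟨p j, j, ⟨rfl, hj⟩, rfl⟩
      · rintro ⟨i', j, ⟨_, hj⟩, rfl⟩; exact ⟨j, hj, rfl⟩
    have hstep : ∀ i, Module.finrank ℝ (incImage c q i) ≤ ∑ i', Module.finrank ℝ (W i i') := by
      intro i; rw [hdecomp i]; exact aux_fle_sum _
    calc ∑ i, Module.finrank ℝ (incImage c q i)
        ≤ ∑ i, ∑ i', Module.finrank ℝ (W i i') := Finset.sum_le_sum fun i _ => hstep i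
      _ = ∑ i', ∑ i, Module.finrank ℝ (W i i') := Finset.sum_comm
      _ ≤ ∑ i', Module.finrank ℝ (incImage c p i') := by
          refine Finset.sum_le_sum fun i' _ => ?_
          by_cases hne : ∃ j, p j = i'
          · obtain ⟨j₀, hj₀⟩ := hne
            rw [Finset.sum_eq_single (q j₀)]
            · exact Submodule.finrank_mono (Submodule.span_mono
                (Set.image_mono Set.inter_subset_left))
            · intro i _ hi
              have : ({j | p j = i'} ∩ {j | q j = i}) = ∅ := by
                ext j
                simp only [Set.mem_inter_iff, Set.mem_setOf_eq, Set.mem_empty_iff_false,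
                  iff_false, not_and]
                intro hpj hqj
                exact hi ((hco j j₀ (hpj.trans hj₀.symm)) ▸ hqj).symm
              rw [hW]
              simp [this]
            · intro h; exact absurd (Finset.mem_univ _) h
          · have : ∀ i, ({j | p j = i'} ∩ {j | q j = i}) = ∅ := by
              intro i; ext j
              simp only [Set.mem_inter_iff, Set.mem_setOf_eq, Set.mem_empty_iff_false, iff_false,
                not_and]
              intro hpj _; exact hne ⟨j, hpj⟩
            have hz : ∀ i, W i i' = ⊥ := by intro i; simp [hW, this i]
            have : ∑ i, Module.finrank ℝ (W i i') = 0 :=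
              Finset.sum_eq_zero fun i _ => by rw [hz i]; exact finrank_bot ℝ _
            omega

/-- FDC characterization: for a reaction network the following are equivalent:
(i) the FID is a coarsening of the FIID; (ii) the FID is bi-independent;
(iii) every independent decomposition is bi-independent; (iv) for every independent
decomposition the deficiency of the network is the sum of the subnetwork deficiencies. -/
theorem stmt_13 (m n r : ℕ) (Y : Matrix (Fin m) (Fin n) ℝ)
    (c : Fin r → (Fin n → ℝ)) (fid fiid : Fin r → Fin r)
    (hfid : IsFID Y c fid) (hfiid : IsFIID c fiid) :
    ((Coarsens fid fiid) ↔ IsIncIndepDecomp c fid) ∧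
    ((Coarsens fid fiid) ↔
      ∀ p : Fin r → Fin r, IsIndepDecomp Y c p → IsIncIndepDecomp c p) ∧
    ((Coarsens fid fiid) ↔
      ∀ p : Fin r → Fin r, IsIndepDecomp Y c p →
        netDef Y c = ∑ i, subDef Y c p i) := by
  obtain ⟨hfid1, hfid2⟩ := hfid
  obtain ⟨hfiid1, hfiid2⟩ := hfiid
  have h12 : Coarsens fid fiid ↔ IsIncIndepDecomp c fid :=
    ⟨fun h => coarsens_incIndep c fid fiid h hfiid1, fun h => hfiid2 fid h⟩
  have h13 : Coarsens fid fiid ↔ ∀ p : Fin r → Fin r, IsIndepDecomp Y c p → IsIncIndepDecomp c p := by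
    constructor
    · intro h p hp
      exact coarsens_incIndep c p fid (hfid2 p hp) (h12.mp h)
    · intro h
      exact h12.mpr (h fid hfid1)
  have h14 : Coarsens fid fiid ↔ ∀ p : Fin r → Fin r, IsIndepDecomp Y c p → netDef Y c = ∑ i, subDef Y c p i := by
    constructor
    · intro h p hp
      exact (indep_incIndep_iff_def Y c p hp).mp (h13.mp h p hp)
    · intro h
      exact h12.mpr ((indep_incIndep_iff_def Y c fid hfid1).mpr (h fid hfid1))
  exact ⟨h12, h13, h14⟩
end AuxLemmas
end

section
/- For a chemical reaction network with n complexes and m species, if the molecularity matrix Y has rank n and n ≤ m, then the finest independent decomposition equals the finest incidence-independent decomposition: a set of columns of the stoichiometric matrix N = Y·W is linearly independent (or satisfies a linear relation) if and only if the corresponding set of columns of the incidence matrix W does, so both matrices induce the same partition of reactions. -/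

lemma injective_of_rank {m n : ℕ} (Y : Matrix (Fin m) (Fin n) ℝ) (hY : Y.rank = n) :
    Function.Injective Y.mulVecLin := by
  rw [← LinearMap.ker_eq_bot]
  have h := LinearMap.finrank_range_add_finrank_ker Y.mulVecLin
  rw [Matrix.rank] at hY
  rw [hY, Module.finrank_fintype_fun_eq_card, Fintype.card_fin] at h
  have : Module.finrank ℝ (LinearMap.ker Y.mulVecLin) = 0 := by omega
  exact Submodule.finrank_eq_zero.1 this

lemma indep_iff_incIndep {m n r k : ℕ} (Y : Matrix (Fin m) (Fin n) ℝ)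
    (hinj : Function.Injective Y.mulVecLin)
    (c : Fin r → (Fin n → ℝ)) (p : Fin r → Fin k) :
    IsIndepDecomp Y c p ↔ IsIncIndepDecomp c p := by
  have hmapinj : Function.Injective (Submodule.map Y.mulVecLin) :=
    Submodule.map_injective_of_injective hinj
  constructor
  · rintro ⟨h1, h2⟩
    constructor
    · intro i
      have := h1 i
      rw [disjoint_iff] at this ⊢
      apply hmapinj
      rw [Submodule.map_bot, Submodule.map_inf Y.mulVecLin hinj, ← this]
      congr 1
      simp only [stoSub, Submodule.map_iSup]
    · apply hmapinj
      rw [← h2]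
      simp only [stoSub, ← Submodule.map_iSup]
  · rintro ⟨h1, h2⟩
    constructor
    · intro i
      have := h1 i
      rw [disjoint_iff] at this ⊢
      rw [stoSub, show (⨆ j, ⨆ (_ : j ≠ i), stoSub Y c p j)
          = Submodule.map Y.mulVecLin (⨆ j, ⨆ (_ : j ≠ i), incImage c p j) by
        simp only [stoSub, Submodule.map_iSup],
        ← Submodule.map_inf Y.mulVecLin hinj, this, Submodule.map_bot]
    · simp only [stoSub, ← Submodule.map_iSup, h2]

/-- If the molecularity matrix `Y` has rank `n` and `n ≤ m`, then the linear dependence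
structure of the columns of the stoichiometric matrix `N = Y * W` coincides with that of the
columns of the incidence matrix `W` (i.e. `N·v = 0 ↔ W·v = 0`), and consequently the finest
independent decomposition equals the finest incidence-independent decomposition. -/
theorem stmt_17 (m n r : ℕ) (Y : Matrix (Fin m) (Fin n) ℝ)
    (W : Matrix (Fin n) (Fin r) ℝ)
    (hY : Y.rank = n) (hnm : n ≤ m)
    (fid fiid : Fin r → Fin r)
    (hfid : IsFID Y (fun j => fun i => W i j) fid)
    (hfiid : IsFIID (fun j => fun i => W i j) fiid) :
    (∀ v : Fin r → ℝ, (Y * W).mulVec v = 0 ↔ W.mulVec v = 0) ∧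
    (∀ j j' : Fin r, fid j = fid j' ↔ fiid j = fiid j') := by
  have hinj := injective_of_rank Y hY
  constructor
  · intro v
    constructor
    · intro h
      have : Y.mulVecLin (W.mulVec v) = 0 := by
        simpa [Matrix.mulVecLin_apply, ← Matrix.mulVec_mulVec] using h
      have := hinj (by simpa using this : Y.mulVecLin (W.mulVec v) = Y.mulVecLin 0)
      simpa using this
    · intro h
      rw [← Matrix.mulVec_mulVec, h, Matrix.mulVec_zero]
  · intro j j'
    constructor
    · intro h
      exact hfid.2 fiid ((indep_iff_incIndep Y hinj _ fiid).2 hfiid.1) j j' h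
    · intro h
      exact hfiid.2 fid ((indep_iff_incIndep Y hinj _ fid).1 hfid.1) j j' h
end
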